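/- Let A be the free ℤ-module on {x^α : α a finitely supported integer sequence}, B the free ℤ-module on {x_β : β a finitely supported nonnegative integer sequence}, and (·,·) : A × B → ℤ the bilinear form with (x^α, x_β) = ξ^α_β. Let A_l (resp. B_m) be the span of x^α with α supported in 1,…,l (resp. x_β with β supported in 1,…,m). Define δ⁻_l(x^α) = Σ_{i=1}^{l}(α_i − 1)x^{α−ε_i} and δ⁺_m(x_β) = Σ_{j=1}^{m} β_j x_{β+ε_j}. Then for all a ∈ A_l and b ∈ B_m, (δ⁻_l(a), b) = (a, δ⁺_m(b)); i.e., δ⁻_l and δ⁺_m are adjoint with respect to the form. -/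

import Mathlib

open Finsupp
open scoped Classical

/-- The row index of `k` in the standard tabloid of shape `α`: the least `i` such that
`k < α 0 + ⋯ + α i`. -/
noncomputable def rowIdx (α : ℕ →₀ ℤ) (k : ℕ) : ℕ := sInf {i | (k : ℤ) < ∑ j ∈ Finset.range (i + 1), α j}

/-- The Young subgroup of `S_n` associated to `α`: the stabilizer of the standard tabloid
whose rows are the consecutive blocks of `{0, …, n-1}` of sizes `α 0, α 1, …`. -/
def youngSubgroup (n : ℕ) (α : ℕ →₀ ℤ) : Subgroup (Equiv.Perm (Fin n)) where
  carrier := {σ | ∀ k : Fin n, rowIdx α (σ k) = rowIdx α k}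
  one_mem' := fun _ => rfl
  mul_mem' := by
    intro a b ha hb k
    simpa [Equiv.Perm.mul_apply] using (ha (b k)).trans (hb k)
  inv_mem' := by
    intro a ha k
    have := ha (a⁻¹ k)
    rw [show a (a⁻¹ k) = k by simp] at this
    exact this.symm

/-- The value at `g` of the permutation character of `G` acting on the cosets of `H`:
the number of fixed cosets.  This is the value of the character induced from the
trivial character of `H`. -/
noncomputable def permCharValue {n : ℕ} (H : Subgroup (Equiv.Perm (Fin n)))
    (g : Equiv.Perm (Fin n)) : ℤ :=
  Nat.card {x : Equiv.Perm (Fin n) ⧸ H // g • x = x}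

/-- `ξ^α`, as a function on `S_n`: the permutation character induced from the trivial
character of the Young subgroup `S_α` when `α` is nonnegative with `|α| = n`, and `0`
otherwise. -/
noncomputable def xi (n : ℕ) (α : ℕ →₀ ℤ) (g : Equiv.Perm (Fin n)) : ℤ :=
  if (∀ i, 0 ≤ α i) ∧ (α.sum fun _ v => v) = (n : ℤ) then permCharValue (youngSubgroup n α) g
  else 0

/-- An `α`-tabloid: a sequence of pairwise disjoint subsets of `{0,…,n-1}` with
`|t i| = α i` for every `i`. -/
def IsTabloid (n : ℕ) (α : ℕ →₀ ℤ) (t : ℕ → Finset (Fin n)) : Prop :=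
  (∀ i j, i ≠ j → Disjoint (t i) (t j)) ∧ ∀ i, ((t i).card : ℤ) = α i

/-- The multiset of (nonzero) parts of a finitely supported sequence. -/
def partsOf (β : ℕ →₀ ℕ) : Multiset ℕ := β.support.val.map β

/-- `σ` has cycle type `β` (with `1`s in `β` recording fixed points). -/
def HasCycleType {n : ℕ} (σ : Equiv.Perm (Fin n)) (β : ℕ →₀ ℕ) : Prop :=
  (β.sum fun _ v => v) = n ∧ σ.cycleType = Multiset.filter (fun k => 2 ≤ k) (partsOf β)

/-- A nonnegative sequence regarded as an integer sequence. -/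
noncomputable def natToZ (β : ℕ →₀ ℕ) : ℕ →₀ ℤ := Finsupp.mapRange Int.ofNat rfl β

/-- The virtual character `χ^α = ∑_{σ ∈ S_l} sgn σ · ξ^{α + σ - id_l}` (0-indexed,
the sequence `α + σ - id_l` has `i`-th entry `α i + σ i - i`). -/
noncomputable def chi (n l : ℕ) (α : ℕ →₀ ℤ) (g : Equiv.Perm (Fin n)) : ℤ :=
  ∑ σ : Equiv.Perm (Fin l),
    (Equiv.Perm.sign σ : ℤ) *
      xi n (α + ∑ i : Fin l, Finsupp.single (i : ℕ) (((σ i : ℕ) : ℤ) - (i : ℕ))) g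

/-- `ζ^α`, the irreducible character of `S_n` corresponding to the partition `α` of `n`,
given by the determinantal formula `ζ^α = χ^α` (with `l = n ≥ l(α)`). -/
noncomputable def zeta (n : ℕ) (α : ℕ →₀ ℕ) (g : Equiv.Perm (Fin n)) : ℤ :=
  chi n n (natToZ α) g

/-- `α` is a partition of `n`: weakly decreasing with `|α| = n`. -/
def IsPartitionOf (α : ℕ →₀ ℕ) (n : ℕ) : Prop :=
  (∀ i, α (i + 1) ≤ α i) ∧ (α.sum fun _ v => v) = n

/-- The bilinear pairing on the free `ℤ`-modules `A` (on `x^α`) and `B` (on `x_β`), with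
`(x^α, x_β) = Ξ α β`. -/
noncomputable def pairing (Ξ : (ℕ →₀ ℤ) → (ℕ →₀ ℕ) → ℤ)
    (a : (ℕ →₀ ℤ) →₀ ℤ) (b : (ℕ →₀ ℕ) →₀ ℤ) : ℤ :=
  a.sum fun α ca => b.sum fun β cb => ca * cb * Ξ α β

/-- `δ⁻_l : A → A`, `x^α ↦ ∑_{i=1}^l (α_i - 1) x^{α-ε_i}`. -/
noncomputable def deltaMinus (l : ℕ) : ((ℕ →₀ ℤ) →₀ ℤ) →ₗ[ℤ] ((ℕ →₀ ℤ) →₀ ℤ) :=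
  Finsupp.lift _ ℤ _ fun α =>
    ∑ i ∈ Finset.range l, (α i - 1) • Finsupp.single (α - Finsupp.single i 1) (1 : ℤ)

/-- `δ⁺_m : B → B`, `x_β ↦ ∑_{j=1}^m β_j x_{β+ε_j}`. -/
noncomputable def deltaPlus (m : ℕ) : ((ℕ →₀ ℕ) →₀ ℤ) →ₗ[ℤ] ((ℕ →₀ ℕ) →₀ ℤ) :=
  Finsupp.lift _ ℤ _ fun β =>
    ∑ j ∈ Finset.range m, (β j : ℤ) • Finsupp.single (β + Finsupp.single j 1) (1 : ℤ)

theorem Equiv.Perm.apply_inv_self {β : Type*} (f : Equiv.Perm β) (x : β) : f (f⁻¹ x) = x :=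
  f.apply_symm_apply x

theorem Equiv.Perm.inv_apply_self {β : Type*} (f : Equiv.Perm β) (x : β) : f⁻¹ (f x) = x :=
  f.symm_apply_apply x

set_option linter.unusedSectionVars false

noncomputable def psum (α : ℕ →₀ ℤ) (t : ℕ) : ℤ := ∑ j ∈ Finset.range t, α j

lemma rowIdx_def (α : ℕ →₀ ℤ) (k : ℕ) : rowIdx α k = sInf {i | (k : ℤ) < psum α (i+1)} := rfl

lemma psum_mono (α : ℕ →₀ ℤ) (hpos : ∀ i, 0 ≤ α i) {t t' : ℕ} (h : t ≤ t') :
    psum α t ≤ psum α t' :=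
  Finset.sum_le_sum_of_subset_of_nonneg (Finset.range_subset_range.2 h) (fun i _ _ => hpos i)

lemma psum_nonneg (α : ℕ →₀ ℤ) (hpos : ∀ i, 0 ≤ α i) (t : ℕ) : 0 ≤ psum α t :=
  Finset.sum_nonneg fun i _ => hpos i

lemma psum_stable (α : ℕ →₀ ℤ) {L : ℕ} (hL : ∀ i, L ≤ i → α i = 0) {t : ℕ} (h : L ≤ t) :
    psum α t = psum α L :=
  (Finset.sum_subset (Finset.range_subset_range.2 h)
    (fun x _ hx => hL x (by simpa using hx))).symm

lemma psum_le (α : ℕ →₀ ℤ) (hpos : ∀ i, 0 ≤ α i) {L : ℕ} (hL : ∀ i, L ≤ i → α i = 0)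
    (t : ℕ) : psum α t ≤ psum α L := by
  rcases le_total t L with h | h
  · exact psum_mono α hpos h
  · exact le_of_eq (psum_stable α hL h)

lemma psum_total (α : ℕ →₀ ℤ) {L : ℕ} (hL : ∀ i, L ≤ i → α i = 0) :
    psum α L = α.sum fun _ v => v := by
  rw [Finsupp.sum_of_support_subset α (fun j hj => Finset.mem_range.2 ?_) _ (fun _ _ => rfl)]
  · rfl
  · by_contra h
    exact (Finsupp.mem_support_iff.1 hj) (hL j (le_of_not_gt h))

section Row
variable (α : ℕ →₀ ℤ) {L n : ℕ}
  (hpos : ∀ i, 0 ≤ α i) (hL : ∀ i, L ≤ i → α i = 0) (hn : psum α L = (n : ℤ))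

include hpos hL hn

lemma rowIdx_spec (k : ℕ) (hk : (k : ℤ) < n) :
    psum α (rowIdx α k) ≤ (k : ℤ) ∧ (k : ℤ) < psum α (rowIdx α k + 1) := by
  have hne : {i | (k : ℤ) < psum α (i+1)}.Nonempty := by
    refine ⟨L, ?_⟩
    simp only [Set.mem_setOf_eq]
    rw [psum_stable α hL (Nat.le_succ L), hn]
    exact hk
  have hmem := Nat.sInf_mem hne
  rw [← rowIdx_def] at hmem
  refine ⟨?_, hmem⟩
  rcases Nat.eq_zero_or_eq_succ_pred (rowIdx α k) with h0 | hsucc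
  · rw [h0]; simp [psum]
  · have hlt : rowIdx α k - 1 < rowIdx α k := by omega
    have hnotmem := Nat.notMem_of_lt_sInf (by rw [← rowIdx_def]; exact hlt)
    simp only [Set.mem_setOf_eq, not_lt] at hnotmem
    have : rowIdx α k - 1 + 1 = rowIdx α k := by omega
    rwa [this] at hnotmem

lemma rowIdx_eq_iff (k : ℕ) (hk : (k : ℤ) < n) {i : ℕ} :
    rowIdx α k = i ↔ psum α i ≤ (k : ℤ) ∧ (k : ℤ) < psum α (i + 1) := by
  constructor
  · rintro rfl; exact rowIdx_spec α hpos hL hn k hk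
  · rintro ⟨h1, h2⟩
    obtain ⟨hs1, hs2⟩ := rowIdx_spec α hpos hL hn k hk
    have hle : rowIdx α k ≤ i := Nat.sInf_le h2
    by_contra hne
    have hlt : rowIdx α k < i := lt_of_le_of_ne hle hne
    have : psum α (rowIdx α k + 1) ≤ psum α i := psum_mono α hpos hlt
    omega

lemma rowIdx_pos (k : Fin n) : 0 < α (rowIdx α (k : ℕ)) := by
  obtain ⟨h1, h2⟩ := rowIdx_spec α hpos hL hn k (by exact_mod_cast k.isLt)
  rw [psum, Finset.sum_range_succ, ← psum] at h2
  omega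

lemma card_interval_fin {a b : ℤ} (h0 : 0 ≤ a) (hbn : b ≤ (n : ℤ)) :
    (Finset.univ.filter fun k : Fin n => a ≤ (k : ℤ) ∧ (k : ℤ) < b).card = (b - a).toNat := by
  classical
  rcases le_total b a with hba | hab
  · have : (Finset.univ.filter fun k : Fin n => a ≤ (k : ℤ) ∧ (k : ℤ) < b) = ∅ := by
      apply Finset.filter_eq_empty_iff.2
      intro k _
      omega
    rw [this]; simp; omega
  · have hcard : (Finset.univ.filter fun k : Fin n => a ≤ (k : ℤ) ∧ (k : ℤ) < b).card
        = (Finset.Ico a.toNat b.toNat).card := by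
      refine Finset.card_bij (fun k _ => (k : ℕ)) ?_ ?_ ?_
      · intro k hk
        simp only [Finset.mem_filter] at hk
        simp only [Finset.mem_Ico]
        omega
      · intro k _ k' _ h
        exact Fin.ext h
      · intro x hx
        simp only [Finset.mem_Ico] at hx
        have hxn : x < n := by omega
        refine ⟨⟨x, hxn⟩, ?_, rfl⟩
        simp only [Finset.mem_filter, Finset.mem_univ, true_and]
        omega
    rw [hcard, Nat.card_Ico]
    omega

lemma rowIdx_fiber_card (i : ℕ) :
    (Finset.univ.filter fun k : Fin n => rowIdx α (k : ℕ) = i).card = (α i).toNat := by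
  have hfe : (Finset.univ.filter fun k : Fin n => rowIdx α (k : ℕ) = i)
      = (Finset.univ.filter fun k : Fin n => psum α i ≤ (k : ℤ) ∧ (k : ℤ) < psum α (i+1)) := by
    apply Finset.filter_congr
    intro k _
    exact rowIdx_eq_iff α hpos hL hn k (by exact_mod_cast k.isLt)
  rw [hfe, card_interval_fin α hpos hL hn (psum_nonneg α hpos i) (by rw [← hn]; exact psum_le α hpos hL _)]
  rw [psum, Finset.sum_range_succ, ← psum]
  congr 1
  ring

end Row

lemma mem_youngSubgroup {n : ℕ} {α : ℕ →₀ ℤ} {σ : Equiv.Perm (Fin n)} :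
    σ ∈ youngSubgroup n α ↔ ∀ k : Fin n, rowIdx α (σ k) = rowIdx α k := Iff.rfl

theorem permChar_eq_card_fns (n : ℕ) (α : ℕ →₀ ℤ) (g : Equiv.Perm (Fin n)) :
    permCharValue (youngSubgroup n α) g
      = (Nat.card {f : Fin n → ℕ // (∀ k, f (g k) = f k) ∧
          ∀ i : ℕ, (Finset.univ.filter fun k => f k = i).card
              = (Finset.univ.filter fun k : Fin n => rowIdx α (k : ℕ) = i).card} : ℤ) := by
  classical
  unfold permCharValue
  congr 1
  apply Nat.card_congr
  set H := youngSubgroup n α with hH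
  set r : Fin n → ℕ := fun k => rowIdx α (k : ℕ) with hr
  have hsound : ∀ a b : Equiv.Perm (Fin n), @Setoid.r _ (QuotientGroup.leftRel H) a b →
      (fun k => r (a⁻¹ k)) = (fun k => r (b⁻¹ k)) := by
    intro a b hab
    rw [QuotientGroup.leftRel_apply] at hab
    have h2 : (a⁻¹ * b)⁻¹ ∈ H := H.inv_mem hab
    rw [hH, mem_youngSubgroup] at h2
    funext k
    have := h2 (a⁻¹ k)
    simp only [mul_inv_rev, inv_inv, Equiv.Perm.mul_apply] at this
    rw [Equiv.Perm.apply_inv_self] at this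
    exact this.symm
  let Φ : (Equiv.Perm (Fin n) ⧸ H) → (Fin n → ℕ) :=
    fun x => Quotient.liftOn' x (fun a => fun k => r (a⁻¹ k)) hsound
  have hΦmk : ∀ a : Equiv.Perm (Fin n), Φ (QuotientGroup.mk a) = fun k => r (a⁻¹ k) :=
    fun a => rfl
  have hmk_eq : ∀ a b : Equiv.Perm (Fin n),
      (QuotientGroup.mk a : _ ⧸ H) = QuotientGroup.mk b ↔ ∀ k, r (a⁻¹ k) = r (b⁻¹ k) := by
    intro a b
    rw [QuotientGroup.eq]
    constructor
    · intro hab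
      exact fun k => congrFun (hsound a b (QuotientGroup.leftRel_apply.2 hab)) k
    · intro hfk
      rw [hH, mem_youngSubgroup]
      intro k
      have := hfk (b k)
      rw [Equiv.Perm.inv_apply_self] at this
      simpa using this
  have hfix : ∀ a : Equiv.Perm (Fin n),
      (g • (QuotientGroup.mk a : _ ⧸ H) = QuotientGroup.mk a) ↔
        ∀ k, r (a⁻¹ (g k)) = r (a⁻¹ k) := by
    intro a
    have hsm : g • (QuotientGroup.mk a : _ ⧸ H) = QuotientGroup.mk (g * a) := rfl
    rw [hsm, hmk_eq]
    constructor
    · intro h k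
      have := h (g k)
      simp only [mul_inv_rev, Equiv.Perm.mul_apply, Equiv.Perm.inv_apply_self] at this
      exact this.symm
    · intro h k
      have := h (g⁻¹ k)
      simp only [mul_inv_rev, Equiv.Perm.mul_apply, Equiv.Perm.apply_inv_self] at this ⊢
      exact this.symm
  have hprop : ∀ x : Equiv.Perm (Fin n) ⧸ H, g • x = x →
      (∀ k, Φ x (g k) = Φ x k) ∧
      ∀ i : ℕ, (Finset.univ.filter fun k => Φ x k = i).card
          = (Finset.univ.filter fun k : Fin n => rowIdx α (k : ℕ) = i).card := by
    intro x hx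
    obtain ⟨a, rfl⟩ := QuotientGroup.mk_surjective x
    rw [hfix] at hx
    refine ⟨fun k => hx k, ?_⟩
    intro i
    refine Finset.card_bij (fun k _ => a⁻¹ k) ?_ ?_ ?_
    · intro k hk
      simp only [hΦmk, Finset.mem_filter, Finset.mem_univ, true_and] at hk ⊢
      exact hk
    · intro k _ k' _ h
      exact (a⁻¹ : Equiv.Perm (Fin n)).injective h
    · intro k0 hk0
      simp only [Finset.mem_filter, Finset.mem_univ, true_and, hΦmk] at hk0 ⊢
      exact ⟨a k0, by rw [Equiv.Perm.inv_apply_self]; exact hk0, Equiv.Perm.inv_apply_self a k0⟩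
  refine Equiv.ofBijective
    (fun x => ⟨Φ x.1, (hprop x.1 x.2).1, (hprop x.1 x.2).2⟩) ⟨?_, ?_⟩
  · rintro ⟨x, hx⟩ ⟨y, hy⟩ hxy
    obtain ⟨a, rfl⟩ := QuotientGroup.mk_surjective x
    obtain ⟨b, rfl⟩ := QuotientGroup.mk_surjective y
    simp only [Subtype.mk.injEq] at hxy ⊢
    exact (hmk_eq a b).2 fun k => congrFun hxy k
  · rintro ⟨f, hf1, hf2⟩
    have hcard : ∀ i : ℕ, Fintype.card {k : Fin n // r k = i}
        = Fintype.card {k : Fin n // f k = i} := by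
      intro i
      rw [Fintype.card_subtype, Fintype.card_subtype, hf2 i]
    let w : ∀ i : ℕ, {k : Fin n // r k = i} ≃ {k : Fin n // f k = i} :=
      fun i => Fintype.equivOfCardEq (hcard i)
    let a : Equiv.Perm (Fin n) := Equiv.ofFiberEquiv (f := r) (g := f) w
    have ha : ∀ k, f (a k) = r k := fun k => Equiv.ofFiberEquiv_map w k
    have har : ∀ k, r (a⁻¹ k) = f k := by
      intro k
      have := ha (a⁻¹ k)
      rw [Equiv.Perm.apply_inv_self] at this
      exact this.symm
    refine ⟨⟨QuotientGroup.mk a, ?_⟩, ?_⟩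
    · rw [hfix]
      intro k
      rw [har, har, hf1]
    · simp only [Subtype.mk.injEq]
      exact funext har

/-! ### The canonical permutation of cycle type `β` -/

abbrev nB (β : ℕ →₀ ℕ) : ℕ := β.sum fun _ v => v

noncomputable def rowB (β : ℕ →₀ ℕ) (k : ℕ) : ℕ := rowIdx (natToZ β) k

lemma natToZ_apply (β : ℕ →₀ ℕ) (i : ℕ) : natToZ β i = (β i : ℤ) := rfl

lemma natToZ_pos (β : ℕ →₀ ℕ) : ∀ i, 0 ≤ natToZ β i := fun i => by
  rw [natToZ_apply]; exact Int.natCast_nonneg _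

noncomputable def LB (β : ℕ →₀ ℕ) : ℕ := (β.support.sup id) + 1

lemma LB_spec (β : ℕ →₀ ℕ) : ∀ i, LB β ≤ i → natToZ β i = 0 := by
  intro i hi
  rw [natToZ_apply]
  have : i ∉ β.support := by
    intro hmem
    have := Finset.le_sup (f := id) hmem
    simp only [id] at this
    unfold LB at hi
    omega
  rw [Finsupp.notMem_support_iff.1 this]
  rfl

lemma psum_natToZ (β : ℕ →₀ ℕ) : psum (natToZ β) (LB β) = ((nB β : ℕ) : ℤ) := by
  rw [psum_total (natToZ β) (LB_spec β)]
  unfold natToZ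
  rw [Finsupp.sum_mapRange_index (fun _ => rfl)]
  unfold nB Finsupp.sum
  push_cast
  rfl

lemma blockCard (β : ℕ →₀ ℕ) (j : ℕ) :
    (Finset.univ.filter fun k : Fin (nB β) => rowB β (k : ℕ) = j).card = β j := by
  have := rowIdx_fiber_card (natToZ β) (natToZ_pos β) (LB_spec β) (psum_natToZ β) j
  rw [natToZ_apply, Int.toNat_natCast] at this
  unfold rowB
  convert this

lemma mem_support_rowB (β : ℕ →₀ ℕ) (k : Fin (nB β)) : rowB β (k : ℕ) ∈ β.support := by
  have := rowIdx_pos (natToZ β) (natToZ_pos β) (LB_spec β) (psum_natToZ β) k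
  rw [natToZ_apply] at this
  rw [Finsupp.mem_support_iff]
  unfold rowB
  omega

noncomputable def blockEquiv (β : ℕ →₀ ℕ) (j : ℕ) :
    Fin (β j) ≃ {k : Fin (nB β) // rowB β (k : ℕ) = j} := by
  apply Fintype.equivOfCardEq
  rw [Fintype.card_fin, Fintype.card_subtype, blockCard]

noncomputable def cyc (β : ℕ →₀ ℕ) (j : ℕ) : Equiv.Perm (Fin (nB β)) :=
  (finRotate (β j)).extendDomain (blockEquiv β j)

lemma cyc_apply_ne (β : ℕ →₀ ℕ) {j : ℕ} {k : Fin (nB β)} (h : rowB β (k : ℕ) ≠ j) :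
    cyc β j k = k :=
  Equiv.Perm.extendDomain_apply_not_subtype _ _ h

lemma cyc_apply_mem (β : ℕ →₀ ℕ) (j : ℕ) (x : Fin (β j)) :
    cyc β j ↑(blockEquiv β j x) = ↑(blockEquiv β j (finRotate (β j) x)) := by
  rw [cyc, Equiv.Perm.extendDomain_apply_subtype (finRotate (β j)) (blockEquiv β j)
    (b := ↑(blockEquiv β j x)) (blockEquiv β j x).2]
  have h2 : (⟨↑((blockEquiv β j) x), (blockEquiv β j x).2⟩
      : {k : Fin (nB β) // rowB β (k : ℕ) = j}) = (blockEquiv β j) x := rfl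
  rw [h2, Equiv.symm_apply_apply]

lemma rowB_cyc (β : ℕ →₀ ℕ) (j : ℕ) (k : Fin (nB β)) :
    rowB β ((cyc β j k : Fin (nB β)) : ℕ) = rowB β (k : ℕ) := by
  by_cases h : rowB β (k : ℕ) = j
  · set y := (blockEquiv β j).symm ⟨k, h⟩ with hy
    have hk : (↑((blockEquiv β j) y) : Fin (nB β)) = k := by
      rw [hy, Equiv.apply_symm_apply]
    rw [← hk, cyc_apply_mem]
    rw [((blockEquiv β j) (finRotate (β j) y)).2, ((blockEquiv β j) y).2]
  · rw [cyc_apply_ne β h]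

lemma cyc_disjoint (β : ℕ →₀ ℕ) {j j' : ℕ} (h : j ≠ j') :
    Equiv.Perm.Disjoint (cyc β j) (cyc β j') := by
  intro k
  by_cases hk : rowB β (k : ℕ) = j
  · right; exact cyc_apply_ne β (by rw [hk]; exact h)
  · left; exact cyc_apply_ne β hk

lemma cyc_commute (β : ℕ →₀ ℕ) {j j' : ℕ} (h : j ≠ j') :
    Commute (cyc β j) (cyc β j') :=
  (cyc_disjoint β h).commute

noncomputable def canonPerm (β : ℕ →₀ ℕ) : Equiv.Perm (Fin (nB β)) :=
  β.support.noncommProd (cyc β) (fun _ _ _ _ h => cyc_commute β h)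

lemma cyc_pairwise (β : ℕ →₀ ℕ) (s : Finset ℕ) :
    (s : Set ℕ).Pairwise (Function.onFun Commute (cyc β)) :=
  fun _ _ _ _ h => cyc_commute β h

lemma noncommProd_cyc_apply (β : ℕ →₀ ℕ) (s : Finset ℕ) (k : Fin (nB β)) :
    s.noncommProd (cyc β) (cyc_pairwise β s) k
      = if rowB β (k : ℕ) ∈ s then cyc β (rowB β (k : ℕ)) k else k := by
  classical
  induction s using Finset.induction_on with
  | empty => rw [Finset.noncommProd_empty]; simp
  | @insert a s ha ih =>
    rw [Finset.noncommProd_insert_of_notMem _ _ _ _ ha]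
    simp only [Equiv.Perm.mul_apply]
    rw [ih]
    by_cases h : rowB β (k : ℕ) ∈ s
    · have hne : rowB β (k : ℕ) ≠ a := fun he => ha (he ▸ h)
      rw [if_pos h, if_pos (Finset.mem_insert.2 (Or.inr h))]
      exact cyc_apply_ne β (by rw [rowB_cyc]; exact hne)
    · rw [if_neg h]
      by_cases h2 : rowB β (k : ℕ) = a
      · rw [if_pos (Finset.mem_insert.2 (Or.inl h2)), h2]
      · rw [if_neg (by simp [h, h2]), cyc_apply_ne β h2]

lemma canonPerm_apply (β : ℕ →₀ ℕ) (k : Fin (nB β)) :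
    canonPerm β k = cyc β (rowB β (k : ℕ)) k := by
  rw [canonPerm, noncommProd_cyc_apply, if_pos (mem_support_rowB β k)]

lemma cycleType_cyc (β : ℕ →₀ ℕ) (j : ℕ) :
    (cyc β j).cycleType = if 2 ≤ β j then ({β j} : Multiset ℕ) else 0 := by
  rw [cyc, Equiv.Perm.cycleType_extendDomain]
  by_cases h : 2 ≤ β j
  · rw [if_pos h, cycleType_finRotate_of_le h]
  · rw [if_neg h]
    have h01 : β j = 0 ∨ β j = 1 := by omega
    have h1 : finRotate (β j) = 1 := by
      rcases h01 with h0 | h1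
      · rw [h0]; exact Equiv.ext fun x => x.elim0
      · rw [h1, finRotate_one]; rfl
    rw [h1, Equiv.Perm.cycleType_one]

lemma canonPerm_cycleType (β : ℕ →₀ ℕ) :
    (canonPerm β).cycleType = Multiset.filter (fun k => 2 ≤ k) (partsOf β) := by
  classical
  rw [canonPerm, Equiv.Perm.Disjoint.cycleType_noncommProd
    (fun j _ j' _ h => cyc_disjoint β h)]
  have aux : ∀ s : Finset ℕ,
      (s.sum fun j => (cyc β j).cycleType)
        = Multiset.filter (fun k => 2 ≤ k) (s.val.map β) := by
    intro s
    induction s using Finset.induction_on with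
    | empty => simp
    | @insert a s ha ih =>
      rw [Finset.sum_insert ha, Finset.insert_val_of_notMem ha, Multiset.map_cons,
        Multiset.filter_cons, ih, cycleType_cyc]
  rw [aux]
  rfl

lemma canonPerm_hasCycleType (β : ℕ →₀ ℕ) : HasCycleType (canonPerm β) β :=
  ⟨rfl, canonPerm_cycleType β⟩

lemma const_of_rot {s : ℕ} (g : Fin s → ℕ) (hg : ∀ x, g (finRotate s x) = g x)
    (x y : Fin s) : g x = g y := by
  cases s with
  | zero => exact x.elim0
  | succ t =>
    suffices h : ∀ v (hv : v < t+1), g ⟨v, hv⟩ = g ⟨0, Nat.succ_pos t⟩ by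
      obtain ⟨xv, hxv⟩ := x
      obtain ⟨yv, hyv⟩ := y
      rw [h xv hxv, h yv hyv]
    intro v
    induction v with
    | zero => intro hv; rfl
    | succ w ih =>
      intro hv
      have hw : w < t + 1 := by omega
      have key : (⟨w, hw⟩ : Fin (t+1)) + 1 = ⟨w+1, hv⟩ := by
        apply Fin.ext
        rcases Nat.eq_zero_or_pos t with ht | ht
        · omega
        · have h1 : ((1 : Fin (t+1)) : ℕ) = 1 := by
            simp [Fin.val_one', Nat.mod_eq_of_lt (by omega : 1 < t + 1)]
          rw [Fin.val_add, h1]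
          simpa using Nat.mod_eq_of_lt hv
      have := hg ⟨w, hw⟩
      rw [finRotate_succ_apply, key] at this
      rw [this]
      exact ih hw

lemma canonPerm_invariant_iff (β : ℕ →₀ ℕ) (f : Fin (nB β) → ℕ) :
    (∀ k, f (canonPerm β k) = f k) ↔
      ∀ k k' : Fin (nB β), rowB β (k : ℕ) = rowB β (k' : ℕ) → f k = f k' := by
  constructor
  · intro hf k k' hrow
    set j := rowB β (k : ℕ) with hj
    set e := blockEquiv β j with he
    have hg : ∀ x, (fun x => f ↑(e x)) (finRotate (β j) x) = (fun x => f ↑(e x)) x := by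
      intro x
      show f ↑(e (finRotate (β j) x)) = f ↑(e x)
      rw [← cyc_apply_mem]
      have hr : rowB β ((↑(e x) : Fin (nB β)) : ℕ) = j := (e x).2
      have := hf ↑(e x)
      rw [canonPerm_apply, hr] at this
      exact this
    have hk : (↑(e (e.symm ⟨k, hj.symm⟩)) : Fin (nB β)) = k := by
      rw [Equiv.apply_symm_apply]
    have hk' : (↑(e (e.symm ⟨k', hrow.symm.trans hj.symm⟩)) : Fin (nB β)) = k' := by
      rw [Equiv.apply_symm_apply]
    have := const_of_rot (fun x => f ↑(e x)) hg
      (e.symm ⟨k, hj.symm⟩) (e.symm ⟨k', hrow.symm.trans hj.symm⟩)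
    simpa [hk, hk'] using this
  · intro hf k
    apply hf
    rw [canonPerm_apply, rowB_cyc]

/-! ### Counting distributions of parts into rows -/

noncomputable def rsum (l : ℕ) (β : ℕ →₀ ℕ) (h : {j // j ∈ β.support} → Fin l) (i : ℕ) : ℤ :=
  ∑ j ∈ Finset.univ.filter (fun j : {j // j ∈ β.support} => ((h j : ℕ) = i)), (β (j : ℕ) : ℤ)

def Ok (l : ℕ) (β : ℕ →₀ ℕ) (h : {j // j ∈ β.support} → Fin l) (γ : ℕ →₀ ℤ) : Prop :=
  ∀ i : ℕ, rsum l β h i = γ i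

noncomputable def cnt (l : ℕ) (γ : ℕ →₀ ℤ) (β : ℕ →₀ ℕ) : ℕ :=
  (Finset.univ.filter (fun h : {j // j ∈ β.support} → Fin l => Ok l β h γ)).card

lemma block_nonempty (β : ℕ →₀ ℕ) {j : ℕ} (hj : j ∈ β.support) :
    (Finset.univ.filter fun k : Fin (nB β) => rowB β (k : ℕ) = j).Nonempty := by
  rw [← Finset.card_pos, blockCard]
  exact Nat.pos_of_ne_zero (Finsupp.mem_support_iff.1 hj)

noncomputable def pick (β : ℕ →₀ ℕ) (j : ℕ) (hj : j ∈ β.support) : Fin (nB β) :=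
  (block_nonempty β hj).choose

lemma pick_spec (β : ℕ →₀ ℕ) (j : ℕ) (hj : j ∈ β.support) :
    rowB β ((pick β j hj : Fin (nB β)) : ℕ) = j := by
  exact (Finset.mem_filter.1 (block_nonempty β hj).choose_spec).2

lemma fib_sum (l : ℕ) (β : ℕ →₀ ℕ) (h : {j // j ∈ β.support} → Fin l) (i : ℕ) :
    (Finset.univ.filter fun k : Fin (nB β) =>
        ((h ⟨rowB β (k : ℕ), mem_support_rowB β k⟩ : ℕ)) = i).card
      = ∑ j ∈ Finset.univ.filter (fun j : {j // j ∈ β.support} => ((h j : ℕ) = i)),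
          β (j : ℕ) := by
  classical
  rw [Finset.card_eq_sum_card_fiberwise
    (f := fun k : Fin (nB β) => (⟨rowB β (k : ℕ), mem_support_rowB β k⟩ : {j // j ∈ β.support}))
    (t := Finset.univ.filter (fun j : {j // j ∈ β.support} => ((h j : ℕ) = i)))]
  · apply Finset.sum_congr rfl
    intro j hj
    simp only [Finset.mem_filter, Finset.mem_univ, true_and] at hj
    rw [Finset.filter_filter]
    have heq : (Finset.univ.filter fun k : Fin (nB β) =>
        ((h ⟨rowB β (k : ℕ), mem_support_rowB β k⟩ : ℕ) = i)
          ∧ (⟨rowB β (k : ℕ), mem_support_rowB β k⟩ : {j // j ∈ β.support}) = j)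
        = Finset.univ.filter fun k : Fin (nB β) => rowB β (k : ℕ) = (j : ℕ) := by
      ext k
      simp only [Finset.mem_filter, Finset.mem_univ, true_and, Subtype.ext_iff]
      constructor
      · rintro ⟨_, h2⟩; exact h2
      · intro h2
        have hsub : (⟨rowB β (k : ℕ), mem_support_rowB β k⟩ : {j // j ∈ β.support}) = j :=
          Subtype.ext h2
        refine ⟨?_, h2⟩
        rw [hsub, hj]
    rw [heq, blockCard]
  · intro k hk
    simp only [Finset.coe_filter, Finset.mem_filter, Finset.mem_univ, true_and,
      Set.mem_setOf_eq] at hk ⊢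
    exact hk

lemma row_lt (l : ℕ) (γ : ℕ →₀ ℤ) (hγ : ∀ i, l ≤ i → γ i = 0) (β : ℕ →₀ ℕ)
    (F : Fin (nB β) → ℕ)
    (hFfib : ∀ i : ℕ, (Finset.univ.filter fun k => F k = i).card = (γ i).toNat)
    (k : Fin (nB β)) : F k < l := by
  have h1 : 0 < (Finset.univ.filter fun k' => F k' = F k).card :=
    Finset.card_pos.2 ⟨k, by simp⟩
  rw [hFfib] at h1
  by_contra hcon
  push_neg at hcon
  rw [hγ _ hcon] at h1
  simp at h1

lemma ok_of_inv (l : ℕ) (γ : ℕ →₀ ℤ) (hpos : ∀ i, 0 ≤ γ i) (β : ℕ →₀ ℕ)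
    (F : Fin (nB β) → ℕ) (hFinv : ∀ k, F (canonPerm β k) = F k)
    (hFfib : ∀ i : ℕ, (Finset.univ.filter fun k => F k = i).card = (γ i).toNat)
    (h : {j // j ∈ β.support} → Fin l)
    (hh : ∀ j : {j // j ∈ β.support}, ((h j : ℕ)) = F (pick β (j : ℕ) j.2)) :
    Ok l β h γ := by
  intro i
  have hconst := (canonPerm_invariant_iff β F).1 hFinv
  have hval : ∀ k : Fin (nB β),
      ((h ⟨rowB β (k : ℕ), mem_support_rowB β k⟩ : ℕ)) = F k := by
    intro k
    rw [hh]
    exact hconst _ _ (pick_spec β _ _)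
  have hfil : (Finset.univ.filter fun k : Fin (nB β) =>
      ((h ⟨rowB β (k : ℕ), mem_support_rowB β k⟩ : ℕ)) = i)
        = Finset.univ.filter fun k => F k = i := by
    apply Finset.filter_congr
    intro k _
    rw [hval]
  have hfs := fib_sum l β h i
  rw [hfil, hFfib i] at hfs
  unfold rsum
  rw [show γ i = ((γ i).toNat : ℤ) from (Int.toNat_of_nonneg (hpos i)).symm, hfs,
    Nat.cast_sum]

lemma fib_of_ok (l : ℕ) (γ : ℕ →₀ ℤ) (β : ℕ →₀ ℕ) (h : {j // j ∈ β.support} → Fin l)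
    (hOk : Ok l β h γ) (i : ℕ) :
    (Finset.univ.filter fun k : Fin (nB β) =>
        ((h ⟨rowB β (k : ℕ), mem_support_rowB β k⟩ : ℕ)) = i).card = (γ i).toNat := by
  rw [fib_sum]
  have h1 := hOk i
  unfold rsum at h1
  have h2 : ((∑ j ∈ Finset.univ.filter
      (fun j : {j // j ∈ β.support} => ((h j : ℕ) = i)), β (j : ℕ) : ℕ) : ℤ) = γ i := by
    rw [← h1, Nat.cast_sum]
  omega

lemma hfun_invariant (l : ℕ) (β : ℕ →₀ ℕ) (h : {j // j ∈ β.support} → Fin l) :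
    ∀ k : Fin (nB β),
      (fun k : Fin (nB β) => ((h ⟨rowB β (k : ℕ), mem_support_rowB β k⟩ : Fin l) : ℕ))
          (canonPerm β k)
        = (fun k : Fin (nB β) => ((h ⟨rowB β (k : ℕ), mem_support_rowB β k⟩ : Fin l) : ℕ)) k := by
  exact (canonPerm_invariant_iff β
      (fun k : Fin (nB β) => ((h ⟨rowB β (k : ℕ), mem_support_rowB β k⟩ : Fin l) : ℕ))).2
    (fun k k' hr => congrArg (fun x => ((h x : Fin l) : ℕ)) (Subtype.ext hr))

lemma card_fns_eq_cnt (l : ℕ) (γ : ℕ →₀ ℤ) (hγ : ∀ i, l ≤ i → γ i = 0)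
    (hpos : ∀ i, 0 ≤ γ i) (β : ℕ →₀ ℕ) :
    Nat.card {f : Fin (nB β) → ℕ // (∀ k, f (canonPerm β k) = f k) ∧
        ∀ i : ℕ, (Finset.univ.filter fun k => f k = i).card = (γ i).toNat}
      = cnt l γ β := by
  classical
  have hcnt : cnt l γ β = Nat.card {h : {j // j ∈ β.support} → Fin l // Ok l β h γ} := by
    rw [Nat.card_eq_fintype_card, Fintype.card_subtype]
    unfold cnt
    congr 1
  rw [hcnt]
  apply Nat.card_congr
  refine
    { toFun := fun F => ⟨fun j => ⟨F.1 (pick β (j : ℕ) j.2), row_lt l γ hγ β F.1 F.2.2 _⟩,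
        ok_of_inv l γ hpos β F.1 F.2.1 F.2.2 _ (fun _ => rfl)⟩
      invFun := fun h => ⟨fun k => ((h.1 ⟨rowB β (k : ℕ), mem_support_rowB β k⟩ : Fin l) : ℕ),
        hfun_invariant l β h.1,
        fun i => fib_of_ok l γ β h.1 h.2 i⟩
      left_inv := ?_
      right_inv := ?_ }
  · rintro ⟨F, hF1, hF2⟩
    apply Subtype.ext
    funext k
    exact (canonPerm_invariant_iff β F).1 hF1 _ _ (pick_spec β _ _)
  · rintro ⟨h, hOk⟩
    apply Subtype.ext
    funext j
    apply Fin.ext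
    exact congrArg (fun x => ((h x : Fin l) : ℕ)) (Subtype.ext (pick_spec β (j : ℕ) j.2))

theorem xi_canon_eq_cnt (l : ℕ) (γ : ℕ →₀ ℤ) (hγ : ∀ i, l ≤ i → γ i = 0) (β : ℕ →₀ ℕ) :
    xi (nB β) γ (canonPerm β) = (cnt l γ β : ℤ) := by
  classical
  unfold xi
  split_ifs with hcond
  · obtain ⟨hpos, hsum⟩ := hcond
    have hsumγ : psum γ l = ((nB β : ℕ) : ℤ) := by
      rw [psum_total γ hγ, hsum]
    rw [permChar_eq_card_fns]
    congr 1
    have hfib : ∀ i : ℕ, (Finset.univ.filter fun k : Fin (nB β) => rowIdx γ (k : ℕ) = i).card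
        = (γ i).toNat := fun i => rowIdx_fiber_card γ hpos hγ hsumγ i
    rw [← card_fns_eq_cnt l γ hγ hpos β]
    apply Nat.card_congr
    apply Equiv.subtypeEquivRight
    intro f
    constructor
    · rintro ⟨h1, h2⟩
      exact ⟨h1, fun i => by rw [h2 i, hfib i]⟩
    · rintro ⟨h1, h2⟩
      exact ⟨h1, fun i => by rw [h2 i, hfib i]⟩
  · -- non-matching case: the count is zero
    symm
    rw [Int.natCast_eq_zero]
    unfold cnt
    rw [Finset.card_eq_zero, Finset.filter_eq_empty_iff]
    intro h _
    intro hOk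
    apply hcond
    constructor
    · intro i
      rw [← hOk i]
      unfold rsum
      exact Finset.sum_nonneg fun j _ => Int.natCast_nonneg _
    · -- total sum
      have h1 : (γ.sum fun _ v => v) = psum γ l := (psum_total γ hγ).symm
      rw [h1]
      have h2 : psum γ l = ∑ i ∈ Finset.range l, rsum l β h i := by
        unfold psum
        exact Finset.sum_congr rfl fun i _ => (hOk i).symm
      rw [h2]
      unfold rsum
      rw [Finset.sum_fiberwise_of_maps_to
        (g := fun j : {j // j ∈ β.support} => ((h j : ℕ)))
        (fun j _ => Finset.mem_range.2 (h j).isLt)]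
      rw [Finset.univ_eq_attach, Finset.sum_attach β.support (fun j => (β j : ℤ))]
      unfold nB Finsupp.sum
      push_cast
      rfl

/-! ### The double-counting identity -/

lemma support_add_single (β : ℕ →₀ ℕ) {j : ℕ} (hj : j ∈ β.support) :
    (β + Finsupp.single j 1).support = β.support := by
  ext x
  simp only [Finsupp.mem_support_iff, Finsupp.add_apply, Finsupp.single_apply]
  by_cases hx : j = x
  · subst hx
    have := Finsupp.mem_support_iff.1 hj
    constructor <;> intro <;> omega
  · rw [if_neg hx]
    simp

lemma cnt_plus (l : ℕ) (α : ℕ →₀ ℤ) (β : ℕ →₀ ℕ) {j : ℕ} (hj : j ∈ β.support) :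
    cnt l α (β + Finsupp.single j 1)
      = (Finset.univ.filter (fun h : {j' // j' ∈ β.support} → Fin l =>
          Ok l β h (α - Finsupp.single ((h ⟨j, hj⟩ : ℕ)) 1))).card := by
  classical
  have hs := support_add_single β hj
  let e : {x // x ∈ (β + Finsupp.single j 1).support} ≃ {x // x ∈ β.support} :=
    Equiv.subtypeEquivRight (fun x => by rw [hs])
  have hcoe : ∀ y : {x // x ∈ β.support}, ((e.symm y : {x // x ∈ (β + Finsupp.single j 1).support}) : ℕ) = (y : ℕ) :=
    fun y => rfl
  have hjs : e.symm ⟨j, hj⟩ = ⟨j, by rw [hs]; exact hj⟩ := rfl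
  -- the row-sum transport identity
  have hrs : ∀ (h : {x // x ∈ (β + Finsupp.single j 1).support} → Fin l) (i : ℕ),
      rsum l (β + Finsupp.single j 1) h i
        = rsum l β (h ∘ ⇑e.symm) i
          + (if ((h (e.symm ⟨j, hj⟩) : ℕ)) = i then 1 else 0) := by
    intro h i
    unfold rsum
    rw [Finset.sum_filter, Finset.sum_filter]
    have step1 : (∑ a : {x // x ∈ (β + Finsupp.single j 1).support},
        if ((h a : ℕ)) = i then (((β + Finsupp.single j 1) : ℕ →₀ ℕ) (a : ℕ) : ℤ) else 0)
      = ∑ y : {x // x ∈ β.support},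
          if ((h (e.symm y) : ℕ)) = i then (((β + Finsupp.single j 1) : ℕ →₀ ℕ) (y : ℕ) : ℤ) else 0 := by
      apply Fintype.sum_equiv e
      intro a
      have h1 : e.symm (e a) = a := e.symm_apply_apply a
      have h2 : ((e a : {x // x ∈ β.support}) : ℕ) = (a : ℕ) := rfl
      rw [show ((e a : {x // x ∈ β.support}) : ℕ) = (a : ℕ) from rfl, h1]
    rw [step1]
    have split : ∀ y : {x // x ∈ β.support},
        (if ((h (e.symm y) : ℕ)) = i then (((β + Finsupp.single j 1) : ℕ →₀ ℕ) (y : ℕ) : ℤ) else 0)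
          = (if ((h (e.symm y) : ℕ)) = i then (β (y : ℕ) : ℤ) else 0)
            + (if y = ⟨j, hj⟩ then (if ((h (e.symm y) : ℕ)) = i then 1 else 0) else 0) := by
      intro y
      rw [Finsupp.add_apply, Finsupp.single_apply]
      by_cases h2 : (j = (y : ℕ))
      · have h3 : y = ⟨j, hj⟩ := Subtype.ext h2.symm
        rw [if_pos h2, h3, if_pos rfl]
        split_ifs <;> push_cast <;> ring
      · have h3 : y ≠ ⟨j, hj⟩ := fun he => h2 (by rw [he])
        rw [if_neg h2, if_neg h3]
        split_ifs <;> push_cast <;> ring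
    rw [Finset.sum_congr rfl (fun y _ => split y), Finset.sum_add_distrib]
    congr 1
    rw [Finset.sum_ite_eq' Finset.univ (⟨j, hj⟩ : {x // x ∈ β.support})
      (fun y => if ((h (e.symm y) : ℕ)) = i then (1 : ℤ) else 0)]
    simp
  -- condition transport
  have hcond : ∀ h : {x // x ∈ (β + Finsupp.single j 1).support} → Fin l,
      Ok l (β + Finsupp.single j 1) h α ↔
        Ok l β (h ∘ ⇑e.symm) (α - Finsupp.single (((h ∘ ⇑e.symm) ⟨j, hj⟩ : Fin l) : ℕ) 1) := by
    intro h
    constructor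
    · intro hOk i
      have := hOk i
      rw [hrs] at this
      rw [Finsupp.sub_apply, Finsupp.single_apply]
      simp only [Function.comp_apply]
      omega
    · intro hOk i
      have := hOk i
      rw [Finsupp.sub_apply, Finsupp.single_apply] at this
      rw [hrs]
      simp only [Function.comp_apply] at this
      omega
  unfold cnt
  refine Finset.card_bij' (fun h _ => h ∘ ⇑e.symm) (fun h' _ => h' ∘ ⇑e) ?_ ?_ ?_ ?_
  · intro h hmem
    simp only [Finset.mem_filter, Finset.mem_univ, true_and] at hmem ⊢
    exact (hcond h).1 hmem
  · intro h' hmem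
    simp only [Finset.mem_filter, Finset.mem_univ, true_and] at hmem ⊢
    have hcomp : (h' ∘ ⇑e) ∘ ⇑e.symm = h' := by
      funext y
      simp [Function.comp_apply]
    have := (hcond (h' ∘ ⇑e)).2
    rw [hcomp] at this
    exact this hmem
  · intro h _
    funext x
    simp [Function.comp_apply]
  · intro h' _
    funext y
    simp [Function.comp_apply]

lemma core_identity (l m : ℕ) (α : ℕ →₀ ℤ) (hα : ∀ i, l ≤ i → α i = 0) (β : ℕ →₀ ℕ)
    (hβ : ∀ j, m ≤ j → β j = 0) :
    ∑ i ∈ Finset.range l, (α i - 1) * (cnt l (α - Finsupp.single i 1) β : ℤ)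
      = ∑ j ∈ Finset.range m, (β j : ℤ) * (cnt l α (β + Finsupp.single j 1) : ℤ) := by
  classical
  -- restrict the right-hand sum to the support of β
  have hsub : β.support ⊆ Finset.range m := by
    intro j hjs
    rw [Finset.mem_range]
    by_contra hcon
    exact (Finsupp.mem_support_iff.1 hjs) (hβ j (le_of_not_gt hcon))
  rw [← Finset.sum_subset hsub (fun x _ hx => by
    rw [Finsupp.notMem_support_iff.1 hx]; simp)]
  rw [← Finset.sum_attach β.support
    (fun j => (β j : ℤ) * (cnt l α (β + Finsupp.single j 1) : ℤ))]
  rw [← Finset.univ_eq_attach]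
  -- rewrite the right-hand side using `cnt_plus`
  have hR : ∀ x : {j // j ∈ β.support},
      (β (x : ℕ) : ℤ) * (cnt l α (β + Finsupp.single (x : ℕ) 1) : ℤ)
        = ∑ h ∈ (Finset.univ : Finset ({j' // j' ∈ β.support} → Fin l)),
            (if Ok l β h (α - Finsupp.single ((h x : ℕ)) 1) then (β (x : ℕ) : ℤ) else 0) := by
    intro x
    rw [cnt_plus l α β x.2]
    have hx : (⟨(x : ℕ), x.2⟩ : {j' // j' ∈ β.support}) = x := rfl
    rw [hx]
    rw [← Finset.sum_filter]
    rw [Finset.sum_const, nsmul_eq_mul, mul_comm]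
  rw [Finset.sum_congr rfl (fun x _ => hR x), Finset.sum_comm]
  -- rewrite the left-hand side
  have hL : ∀ i ∈ Finset.range l,
      (α i - 1) * (cnt l (α - Finsupp.single i 1) β : ℤ)
        = ∑ h ∈ (Finset.univ : Finset ({j' // j' ∈ β.support} → Fin l)),
            (if Ok l β h (α - Finsupp.single i 1) then rsum l β h i else 0) := by
    intro i _
    rw [← Finset.sum_filter]
    have hval : ∀ h ∈ Finset.univ.filter
        (fun h : {j' // j' ∈ β.support} → Fin l => Ok l β h (α - Finsupp.single i 1)),
        rsum l β h i = α i - 1 := by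
      intro h hmem
      simp only [Finset.mem_filter, Finset.mem_univ, true_and] at hmem
      rw [hmem i, Finsupp.sub_apply, Finsupp.single_apply, if_pos rfl]
    rw [Finset.sum_congr rfl hval, Finset.sum_const, nsmul_eq_mul, mul_comm]
    rfl
  rw [Finset.sum_congr rfl hL, Finset.sum_comm]
  -- pointwise in `h`
  apply Finset.sum_congr rfl
  intro h _
  -- expand rsum and swap
  have e1 : ∀ i ∈ Finset.range l,
      (if Ok l β h (α - Finsupp.single i 1) then rsum l β h i else 0)
        = ∑ x ∈ (Finset.univ : Finset {j' // j' ∈ β.support}),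
            (if ((h x : ℕ) = i ∧ Ok l β h (α - Finsupp.single i 1))
              then (β (x : ℕ) : ℤ) else 0) := by
    intro i _
    by_cases hc : Ok l β h (α - Finsupp.single i 1)
    · rw [if_pos hc]
      unfold rsum
      rw [Finset.sum_filter]
      exact Finset.sum_congr rfl fun x _ => by simp [hc]
    · rw [if_neg hc]
      symm
      exact Finset.sum_eq_zero fun x _ => by simp [hc]
  rw [Finset.sum_congr rfl e1, Finset.sum_comm]
  apply Finset.sum_congr rfl
  intro x _
  have e2 : ∀ i ∈ Finset.range l,
      (if ((h x : ℕ) = i ∧ Ok l β h (α - Finsupp.single i 1))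
          then (β (x : ℕ) : ℤ) else 0)
        = (if i = ((h x : ℕ))
            then (if Ok l β h (α - Finsupp.single i 1) then (β (x : ℕ) : ℤ) else 0) else 0) := by
    intro i _
    by_cases h1 : ((h x : ℕ)) = i
    · subst h1
      simp
    · have h1' : i ≠ ((h x : ℕ)) := fun he => h1 he.symm
      simp [h1, h1']
  rw [Finset.sum_congr rfl e2, Finset.sum_ite_eq' (Finset.range l) ((h x : ℕ))
    (fun i => if Ok l β h (α - Finsupp.single i 1) then (β (x : ℕ) : ℤ) else 0)]
  rw [if_pos (Finset.mem_range.2 (h x).isLt)]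

/-! ### Putting everything together -/

lemma sub_single_bound (l : ℕ) (γ : ℕ →₀ ℤ) (hγ : ∀ i, l ≤ i → γ i = 0) {i : ℕ}
    (hi : i < l) : ∀ i', l ≤ i' → ((γ - Finsupp.single i 1 : ℕ →₀ ℤ)) i' = 0 := by
  intro i' hi'
  rw [Finsupp.sub_apply, hγ i' hi', Finsupp.single_apply, if_neg (by omega)]
  ring

theorem pointwise_identity (l m : ℕ) (Ξ : (ℕ →₀ ℤ) → (ℕ →₀ ℕ) → ℤ)
    (hΞ : ∀ (α : ℕ →₀ ℤ) (β : ℕ →₀ ℕ) (σ : Equiv.Perm (Fin (β.sum fun _ v => v))),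
      HasCycleType σ β → Ξ α β = xi (β.sum fun _ v => v) α σ)
    (γ : ℕ →₀ ℤ) (hγ : ∀ i, l ≤ i → γ i = 0) (β : ℕ →₀ ℕ) (hβ : ∀ j, m ≤ j → β j = 0) :
    (∑ i ∈ Finset.range l, (γ i - 1) * Ξ (γ - Finsupp.single i 1) β)
      = ∑ j ∈ Finset.range m, (β j : ℤ) * Ξ γ (β + Finsupp.single j 1) := by
  have hXi : ∀ (δ : ℕ →₀ ℤ) (β' : ℕ →₀ ℕ), (∀ i, l ≤ i → δ i = 0) →
      Ξ δ β' = (cnt l δ β' : ℤ) := by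
    intro δ β' hδ
    rw [hΞ δ β' (canonPerm β') (canonPerm_hasCycleType β')]
    exact xi_canon_eq_cnt l δ hδ β'
  rw [Finset.sum_congr rfl (fun i hi => by
    rw [hXi (γ - Finsupp.single i 1) β
      (sub_single_bound l γ hγ (Finset.mem_range.1 hi))])]
  have h2 : (∑ j ∈ Finset.range m, (β j : ℤ) * Ξ γ (β + Finsupp.single j 1))
      = ∑ j ∈ Finset.range m, (β j : ℤ) * (cnt l γ (β + Finsupp.single j 1) : ℤ) :=
    Finset.sum_congr rfl (fun j _ => by rw [hXi γ (β + Finsupp.single j 1) hγ])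
  rw [h2]
  exact core_identity l m γ hγ β hβ

/-- `δ⁻_l` and `δ⁺_m` are adjoint with respect to the pairing `(x^α, x_β) = ξ^α_β`:
for `a ∈ A_l` and `b ∈ B_m`, `(δ⁻_l a, b) = (a, δ⁺_m b)`. -/
theorem stmt14 (l m : ℕ) (Ξ : (ℕ →₀ ℤ) → (ℕ →₀ ℕ) → ℤ)
    (hΞ : ∀ (α : ℕ →₀ ℤ) (β : ℕ →₀ ℕ) (σ : Equiv.Perm (Fin (β.sum fun _ v => v))),
      HasCycleType σ β → Ξ α β = xi (β.sum fun _ v => v) α σ)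
    (a : (ℕ →₀ ℤ) →₀ ℤ) (b : (ℕ →₀ ℕ) →₀ ℤ)
    (ha : ∀ α ∈ a.support, ∀ i, l ≤ i → α i = 0)
    (hb : ∀ β ∈ b.support, ∀ j, m ≤ j → β j = 0) :
    pairing Ξ (deltaMinus l a) b = pairing Ξ a (deltaPlus m b) := by
  classical
  have key : ∀ γ ∈ a.support, ∀ β' ∈ b.support,
      (∑ i ∈ Finset.range l, (γ i - 1) * Ξ (γ - Finsupp.single i 1) β')
        = ∑ j ∈ Finset.range m, (β' j : ℤ) * Ξ γ (β' + Finsupp.single j 1) :=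
    fun γ hγ β' hβ' => pointwise_identity l m Ξ hΞ γ (ha γ hγ) β' (hb β' hβ')
  have hL : pairing Ξ (deltaMinus l a) b
      = ∑ γ ∈ a.support, a γ * ∑ i ∈ Finset.range l, (γ i - 1) *
          (∑ β' ∈ b.support, b β' * Ξ (γ - Finsupp.single i 1) β') := by
    have hpair : ∀ A : (ℕ →₀ ℤ) →₀ ℤ, pairing Ξ A b
        = (Finsupp.lift ℤ ℤ (ℕ →₀ ℤ) (fun γ => b.sum fun β' cb => cb * Ξ γ β')) A := by
      intro A
      rw [Finsupp.lift_apply]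
      unfold pairing
      apply Finsupp.sum_congr
      intro γ _
      rw [smul_eq_mul, Finsupp.mul_sum]
      apply Finsupp.sum_congr
      intro β' _
      ring
    have hdm : deltaMinus l a = a.sum fun γ cγ => cγ •
        (∑ i ∈ Finset.range l, (γ i - 1) • Finsupp.single (γ - Finsupp.single i 1) (1 : ℤ)) := by
      unfold deltaMinus
      rw [Finsupp.lift_apply]
    rw [hpair, hdm, map_finsuppSum, Finsupp.sum]
    apply Finset.sum_congr rfl
    intro γ _
    rw [map_smul, smul_eq_mul]
    congr 1
    rw [map_sum]
    apply Finset.sum_congr rfl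
    intro i _
    rw [map_smul, smul_eq_mul]
    congr 1
    rw [Finsupp.lift_apply, Finsupp.sum_single_index (by simp), one_smul]
    rfl
  have hR : pairing Ξ a (deltaPlus m b)
      = ∑ γ ∈ a.support, a γ * ∑ β' ∈ b.support, b β' *
          ∑ j ∈ Finset.range m, (β' j : ℤ) * Ξ γ (β' + Finsupp.single j 1) := by
    unfold pairing
    rw [Finsupp.sum]
    apply Finset.sum_congr rfl
    intro γ _
    have h1 : ((deltaPlus m b).sum fun β' cb => a γ * cb * Ξ γ β')
        = a γ * (Finsupp.lift ℤ ℤ (ℕ →₀ ℕ) (fun β' => Ξ γ β')) (deltaPlus m b) := by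
      rw [Finsupp.lift_apply, Finsupp.mul_sum]
      apply Finsupp.sum_congr
      intro β' _
      rw [smul_eq_mul]
      ring
    rw [h1]
    congr 1
    have hdp : deltaPlus m b = b.sum fun β' cb => cb •
        (∑ j ∈ Finset.range m, ((β' j : ℤ)) • Finsupp.single (β' + Finsupp.single j 1) (1 : ℤ)) := by
      unfold deltaPlus
      rw [Finsupp.lift_apply]
    rw [hdp, map_finsuppSum, Finsupp.sum]
    apply Finset.sum_congr rfl
    intro β' _
    rw [map_smul, smul_eq_mul]
    congr 1
    rw [map_sum]
    apply Finset.sum_congr rfl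
    intro j _
    rw [map_smul, smul_eq_mul]
    congr 1
    rw [Finsupp.lift_apply, Finsupp.sum_single_index (by simp), one_smul]
  rw [hL, hR]
  apply Finset.sum_congr rfl
  intro γ hγ
  congr 1
  have hswap : (∑ i ∈ Finset.range l, (γ i - 1) *
      (∑ β' ∈ b.support, b β' * Ξ (γ - Finsupp.single i 1) β'))
        = ∑ β' ∈ b.support, b β' *
            ∑ i ∈ Finset.range l, (γ i - 1) * Ξ (γ - Finsupp.single i 1) β' := by
    rw [Finset.sum_congr rfl (fun i (_ : i ∈ Finset.range l) => Finset.mul_sum b.support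
      (fun β' => b β' * Ξ (γ - Finsupp.single i 1) β') ((γ : ℕ →₀ ℤ) i - 1)),
      Finset.sum_comm]
    apply Finset.sum_congr rfl
    intro β' _
    rw [Finset.mul_sum]
    apply Finset.sum_congr rfl
    intro i _
    ring
  rw [hswap]
  apply Finset.sum_congr rfl
  intro β' hβ'
  rw [key γ hγ β' hβ']
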